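/- arXiv:2507.05039 — 2 statements merged into one kernel-verified Lean document; each statement's English description precedes it below -/
import Mathlib

section
/- Let $\alpha\in[0,1)$, and define $\mu(x)=\langle x\rangle^{2-\alpha}=(1+|x|^2)^{(2-\alpha)/2}$ on $\mathbb{R}^d$ and $k_\alpha=\langle k\rangle^{\alpha/(1-\alpha)}k$ for $k\in\mathbb{Z}^d$. Then $|\nabla\mu(k_\alpha)-(2-\alpha)k|\le \frac{C\alpha(2-\alpha)}{1-\alpha}|k|^{-1}$ for all $k\ne 0$, for some absolute constant $C$. -/
open MeasureTheory

/-- The lattice point `k` viewed as a vector in `ℝ^d`. -/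
noncomputable def intVec (d : ℕ) (k : Fin d → ℤ) : EuclideanSpace ℝ (Fin d) :=
  WithLp.toLp 2 (fun i => (k i : ℝ))

/-- The gradient of `μ(x) = ⟨x⟩^{2-α}`, namely `∇μ(x) = (2-α)⟨x⟩^{-α} x`. -/
noncomputable def gradMu (d : ℕ) (α : ℝ) (x : EuclideanSpace ℝ (Fin d)) :
    EuclideanSpace ℝ (Fin d) :=
  ((2 - α) * (1 + ‖x‖ ^ 2) ^ (-α / 2)) • x

/-- The scaled lattice point `k_α = ⟨k⟩^{α/(1-α)} k`. -/
noncomputable def kAlpha (d : ℕ) (α : ℝ) (k : Fin d → ℤ) : EuclideanSpace ℝ (Fin d) :=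
  ((1 + ‖intVec d k‖ ^ 2) ^ ((α / (1 - α)) / 2)) • intVec d k

/-!
Write `t = |k|²`, `s = 1 + t` and `β = α/(1-α)`, so that `|k_α|² = s^β t` and
`∇μ(k_α) - (2-α)k = (2-α)(f - 1) k` with `f = (1 + s^β t)^{-α/2} s^{β/2}`.
Since `(β + 1) α = β`, one has `f = r^{α/2}` for `r = s^β s / (1 + s^β t)`, and elementary
algebra gives `1 ≤ r ≤ 1 + 1/t`. Bernoulli's inequality then yields `0 ≤ f - 1 ≤ α/(2t)`,
hence `|∇μ(k_α) - (2-α)k| ≤ α(2-α)/(2|k|)`, which is the claim with `C = 1/2`.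
-/

open Real

lemma one_le_mul_one_add_div {c t : ℝ} (hc : 1 ≤ c) (ht : 0 ≤ t) :
    1 ≤ c * (1 + t) / (1 + c * t) := by
  rw [one_le_div (by positivity)]
  linarith

lemma mul_one_add_div_le {c t : ℝ} (hc : 0 ≤ c) (ht : 0 < t) :
    c * (1 + t) / (1 + c * t) ≤ 1 + t⁻¹ := by
  rw [div_le_iff₀ (by positivity)]
  field_simp
  nlinarith

lemma rpow_div_one_sub_half_eq {α s : ℝ} (hα1 : α ≠ 1) (hs : 0 < s) :
    s ^ (α / (1 - α) / 2) = (s ^ (α / (1 - α)) * s) ^ (α / 2) := by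
  have h1α : 1 - α ≠ 0 := sub_ne_zero.2 hα1.symm
  rw [← rpow_add_one hs.ne', ← rpow_mul hs.le]
  congr 1
  field_simp
  ring

lemma abs_rpow_neg_mul_rpow_sub_one_le {α t : ℝ} (hα : 0 ≤ α) (hα1 : α < 1) (ht : 0 < t) :
    |(1 + (1 + t) ^ (α / (1 - α)) * t) ^ (-α / 2) * (1 + t) ^ (α / (1 - α) / 2) - 1|
      ≤ α / 2 * t⁻¹ := by
  set c := (1 + t) ^ (α / (1 - α))
  have hc : 1 ≤ c := one_le_rpow (by linarith) (div_nonneg hα (by linarith))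
  have hA : 0 < 1 + c * t := by positivity
  have hf : (1 + c * t) ^ (-α / 2) * (1 + t) ^ (α / (1 - α) / 2)
      = (c * (1 + t) / (1 + c * t)) ^ (α / 2) := by
    rw [rpow_div_one_sub_half_eq hα1.ne (by linarith), div_rpow (by positivity) hA.le,
      neg_div, rpow_neg hA.le, inv_mul_eq_div]
  have hr₁ := one_le_mul_one_add_div hc ht.le
  have hr₂ := mul_one_add_div_le (c := c) (by linarith) ht
  have hlower : 1 ≤ (c * (1 + t) / (1 + c * t)) ^ (α / 2) := one_le_rpow hr₁ (by positivity)
  have hupper : (c * (1 + t) / (1 + c * t)) ^ (α / 2) ≤ 1 + α / 2 * t⁻¹ :=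
    calc (c * (1 + t) / (1 + c * t)) ^ (α / 2)
        ≤ (1 + t⁻¹) ^ (α / 2) := rpow_le_rpow (by linarith) hr₂ (by positivity)
      _ ≤ 1 + α / 2 * t⁻¹ :=
        rpow_one_add_le_one_add_mul_self (by linarith [inv_pos.2 ht]) (by positivity)
          (by linarith)
  rw [hf, abs_of_nonneg (by linarith)]
  linarith

theorem norm_gradMu_rpow_smul_sub_le {d : ℕ} {α : ℝ} (hα : 0 ≤ α) (hα1 : α < 1)
    {x : EuclideanSpace ℝ (Fin d)} (hx : x ≠ 0) :
    ‖gradMu d α ((1 + ‖x‖ ^ 2) ^ (α / (1 - α) / 2) • x) - (2 - α) • x‖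
      ≤ α * (2 - α) / 2 * ‖x‖⁻¹ := by
  have hx₀ : 0 < ‖x‖ := norm_pos_iff.2 hx
  have hs : 0 < 1 + ‖x‖ ^ 2 := by positivity
  have hnorm : ‖(1 + ‖x‖ ^ 2) ^ (α / (1 - α) / 2) • x‖ ^ 2
      = (1 + ‖x‖ ^ 2) ^ (α / (1 - α)) * ‖x‖ ^ 2 := by
    rw [norm_smul, mul_pow, norm_of_nonneg (by positivity), ← rpow_natCast,
      ← rpow_mul hs.le]
    norm_num
  have hdiff : gradMu d α ((1 + ‖x‖ ^ 2) ^ (α / (1 - α) / 2) • x) - (2 - α) • x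
      = ((2 - α) * ((1 + (1 + ‖x‖ ^ 2) ^ (α / (1 - α)) * ‖x‖ ^ 2) ^ (-α / 2)
          * (1 + ‖x‖ ^ 2) ^ (α / (1 - α) / 2) - 1)) • x := by
    rw [gradMu, hnorm, smul_smul, ← sub_smul]
    ring_nf
  rw [hdiff, norm_smul, norm_mul, norm_of_nonneg (by linarith : (0 : ℝ) ≤ 2 - α), norm_eq_abs]
  calc (2 - α) * |(1 + (1 + ‖x‖ ^ 2) ^ (α / (1 - α)) * ‖x‖ ^ 2) ^ (-α / 2)
          * (1 + ‖x‖ ^ 2) ^ (α / (1 - α) / 2) - 1| * ‖x‖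
      ≤ (2 - α) * (α / 2 * (‖x‖ ^ 2)⁻¹) * ‖x‖ := by
        gcongr
        · linarith
        · exact abs_rpow_neg_mul_rpow_sub_one_le hα hα1 (by positivity)
    _ = α * (2 - α) / 2 * ‖x‖⁻¹ := by
        field_simp

lemma intVec_ne_zero {d : ℕ} {k : Fin d → ℤ} (hk : k ≠ 0) : intVec d k ≠ 0 := by
  intro h
  apply hk
  funext i
  simpa [intVec] using congrArg (· i) h

/-- `|∇μ(k_α) - (2-α)k| ≤ C α(2-α)/(1-α) · |k|⁻¹` for an absolute constant `C`. -/
theorem gradMu_kAlpha_approx :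
    ∃ C : ℝ, 0 < C ∧ ∀ (d : ℕ) (α : ℝ), 0 ≤ α → α < 1 →
      ∀ k : Fin d → ℤ, k ≠ 0 →
        ‖gradMu d α (kAlpha d α k) - (2 - α) • intVec d k‖
          ≤ C * α * (2 - α) / (1 - α) * ‖intVec d k‖⁻¹ := by
  refine ⟨1 / 2, by norm_num, fun d α hα hα1 k hk => ?_⟩
  have h1α : 0 < 1 - α := by linarith
  calc ‖gradMu d α (kAlpha d α k) - (2 - α) • intVec d k‖
      ≤ α * (2 - α) / 2 * ‖intVec d k‖⁻¹ :=
        norm_gradMu_rpow_smul_sub_le hα hα1 (intVec_ne_zero hk)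
    _ ≤ 1 / 2 * α * (2 - α) / (1 - α) * ‖intVec d k‖⁻¹ := by
        refine mul_le_mul_of_nonneg_right ?_ (by positivity)
        rw [div_le_div_iff₀ (by norm_num) h1α]
        nlinarith [mul_nonneg (mul_nonneg hα hα) (by linarith : (0 : ℝ) ≤ 2 - α)]
end

section
/- Let $\alpha\in[0,1)$, $\mu(x)=\langle x\rangle^{2-\alpha}$ on $\mathbb{R}^d$, and $k_\alpha=\langle k\rangle^{\alpha/(1-\alpha)}k$. For any sufficiently small $r>0$ there exists $R>0$ such that for all $k\ne l$ in $\mathbb{Z}^d$ with $|k|,|l|>R$, the balls $B(\nabla\mu(k_\alpha),r)$ and $B(\nabla\mu(l_\alpha),r)$ are disjoint. -/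
open MeasureTheory Metric

open Real

/-!
Write `n = |k|²` and `a = ⟨k⟩^{2α/(1-α)}`. Since `(α/(1-α) + 1)·α = α/(1-α)`, the gradient
at `k_α` is `∇μ(k_α) = (2-α) t^{α/2} k` with `t = a(1+n)/(1+an) = ⟨k⟩^{2/(1-α)} / ⟨k_α⟩²`,
and `1 ≤ t ≤ 1 + 1/n`. Hence `|∇μ(k_α) - (2-α)k| ≤ 2(t - 1)|k| ≤ 2/|k|`, which is below `r`
for large `|k|`, while distinct points `(2-α)k` of the dilated lattice are at distance at
least `1 > 4r`.
-/

lemma rpow_half_sq {x : ℝ} (hx : 0 ≤ x) (y : ℝ) : (x ^ (y / 2)) ^ 2 = x ^ y := by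
  rw [← rpow_mul_natCast hx]
  norm_num

lemma abs_rpow_sub_one_le {t β : ℝ} (ht : 1 ≤ t) (hβ₀ : 0 ≤ β) (hβ₁ : β ≤ 1) :
    |t ^ β - 1| ≤ t - 1 := by
  rw [abs_of_nonneg (sub_nonneg.2 (one_le_rpow ht hβ₀))]
  linarith [rpow_le_self_of_one_le ht hβ₁]

lemma one_le_mul_one_add_div_one_add_mul {a n : ℝ} (ha : 1 ≤ a) (hn : 0 ≤ n) :
    1 ≤ a * (1 + n) / (1 + a * n) := by
  rw [one_le_div (by positivity)]
  linarith

lemma mul_one_add_div_one_add_mul_le {a n : ℝ} (ha : 0 ≤ a) (hn : 0 < n) :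
    a * (1 + n) / (1 + a * n) ≤ 1 + 1 / n := by
  rw [div_le_iff₀ (by positivity), ← sub_nonneg]
  have : (1 + 1 / n) * (1 + a * n) - a * (1 + n) = 1 + 1 / n := by field_simp; ring
  rw [this]
  positivity

lemma disjoint_ball_ball_of_dist_lt {X : Type*} [PseudoMetricSpace X] {a b x y : X} {r : ℝ}
    (ha : dist a x < r) (hb : dist b y < r) (hxy : 4 * r ≤ dist x y) :
    Disjoint (ball a r) (ball b r) := by
  apply ball_disjoint_ball
  linarith [dist_triangle4 x a b y, dist_comm x a]

lemma intVec_sub (d : ℕ) (k l : Fin d → ℤ) : intVec d (k - l) = intVec d k - intVec d l := by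
  ext i
  simp [intVec]

lemma one_le_norm_intVec {d : ℕ} {k : Fin d → ℤ} (hk : k ≠ 0) : 1 ≤ ‖intVec d k‖ := by
  obtain ⟨i, hi⟩ := Function.ne_iff.1 hk
  calc (1 : ℝ) ≤ |(k i : ℝ)| := by exact_mod_cast Int.one_le_abs hi
    _ = ‖intVec d k i‖ := (norm_eq_abs _).symm
    _ ≤ ‖intVec d k‖ := PiLp.norm_apply_le _ i

lemma gradMu_smul_rpow (d : ℕ) {α : ℝ} (hα1 : α < 1) (v : EuclideanSpace ℝ (Fin d)) :
    gradMu d α ((1 + ‖v‖ ^ 2) ^ (α / (1 - α) / 2) • v) =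
      ((2 - α) * ((1 + ‖v‖ ^ 2) ^ (α / (1 - α)) * (1 + ‖v‖ ^ 2) /
        (1 + (1 + ‖v‖ ^ 2) ^ (α / (1 - α)) * ‖v‖ ^ 2)) ^ (α / 2)) • v := by
  set n := ‖v‖ ^ 2
  set a := (1 + n) ^ (α / (1 - α))
  have hc : (1 + n) ^ (α / (1 - α) / 2) = (a * (1 + n)) ^ (α / 2) := by
    have : 1 - α ≠ 0 := by linarith
    rw [← rpow_add_one (by positivity), ← rpow_mul (by positivity)]
    congr 1
    field_simp
    ring
  have hnorm : ‖(1 + n) ^ (α / (1 - α) / 2) • v‖ ^ 2 = a * n := by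
    rw [norm_smul, mul_pow, norm_eq_abs, sq_abs, rpow_half_sq (by positivity)]
  rw [gradMu, hnorm, smul_smul, hc, div_rpow (by positivity) (by positivity), neg_div,
    rpow_neg (by positivity)]
  congr 1
  ring

lemma norm_gradMu_smul_rpow_sub_le (d : ℕ) {α : ℝ} (hα : 0 ≤ α) (hα1 : α < 1)
    {v : EuclideanSpace ℝ (Fin d)} (hv : v ≠ 0) :
    ‖gradMu d α ((1 + ‖v‖ ^ 2) ^ (α / (1 - α) / 2) • v) - (2 - α) • v‖ ≤ 2 / ‖v‖ := by
  rw [gradMu_smul_rpow d hα1, ← sub_smul, norm_smul, ← mul_sub_one]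
  set n := ‖v‖ ^ 2
  set a := (1 + n) ^ (α / (1 - α))
  set t := a * (1 + n) / (1 + a * n)
  have hn : 0 < n := by positivity
  have ht : 1 ≤ t :=
    one_le_mul_one_add_div_one_add_mul (one_le_rpow (by linarith) (by positivity)) hn.le
  have hpow : |t ^ (α / 2) - 1| ≤ 1 / n :=
    (abs_rpow_sub_one_le ht (by positivity) (by linarith)).trans
      (by linarith [mul_one_add_div_one_add_mul_le (by positivity : 0 ≤ a) hn])
  calc ‖(2 - α) * (t ^ (α / 2) - 1)‖ * ‖v‖ = (2 - α) * |t ^ (α / 2) - 1| * ‖v‖ := by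
        rw [norm_mul, norm_eq_abs, norm_eq_abs, abs_of_pos (by linarith : 0 < 2 - α)]
    _ ≤ 2 * (1 / n) * ‖v‖ := by gcongr; linarith
    _ = 2 / ‖v‖ := by field_simp; rfl

theorem gradMu_kAlpha_balls_disjoint_general (d : ℕ) (α : ℝ) (hα : 0 ≤ α) (hα1 : α < 1) :
    ∃ r₀ : ℝ, 0 < r₀ ∧ ∀ r : ℝ, 0 < r → r < r₀ →
      ∃ R : ℝ, 0 < R ∧ ∀ k l : Fin d → ℤ, k ≠ l →
        R < ‖intVec d k‖ → R < ‖intVec d l‖ →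
        Disjoint (ball (gradMu d α (kAlpha d α k)) r) (ball (gradMu d α (kAlpha d α l)) r) := by
  refine ⟨1 / 4, by norm_num, fun r hr hr₀ =>
    ⟨max 1 (2 / r), by positivity, fun k l hkl hk hl => ?_⟩⟩
  have hclose : ∀ m, max 1 (2 / r) < ‖intVec d m‖ →
      dist (gradMu d α (kAlpha d α m)) ((2 - α) • intVec d m) < r := by
    intro m hm
    have hm₀ : 0 < ‖intVec d m‖ := by linarith [le_max_left 1 (2 / r)]
    rw [dist_eq_norm]
    calc _ ≤ 2 / ‖intVec d m‖ := norm_gradMu_smul_rpow_sub_le d hα hα1 (norm_pos_iff.1 hm₀)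
      _ < r := (div_lt_iff₀ hm₀).2
        (by linarith [(div_lt_iff₀' hr).1 ((le_max_right _ _).trans_lt hm)])
  refine disjoint_ball_ball_of_dist_lt (hclose k hk) (hclose l hl) ?_
  calc 4 * r ≤ 1 * 1 := by linarith
    _ ≤ (2 - α) * ‖intVec d (k - l)‖ :=
        mul_le_mul (by linarith) (one_le_norm_intVec (sub_ne_zero.2 hkl)) zero_le_one (by linarith)
    _ = dist ((2 - α) • intVec d k) ((2 - α) • intVec d l) := by
        rw [dist_eq_norm, ← smul_sub, norm_smul, intVec_sub, norm_eq_abs,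
          abs_of_pos (by linarith)]

/-- For any sufficiently small `r > 0` there is `R > 0` such that the balls
`B(∇μ(k_α), r)` for `|k| > R` are pairwise disjoint. -/
theorem gradMu_kAlpha_balls_disjoint (d : ℕ) (hd : 1 ≤ d) (α : ℝ) (hα : 0 ≤ α) (hα1 : α < 1) :
    ∃ r₀ : ℝ, 0 < r₀ ∧ ∀ r : ℝ, 0 < r → r < r₀ →
      ∃ R : ℝ, 0 < R ∧ ∀ k l : Fin d → ℤ, k ≠ l →
        R < ‖intVec d k‖ → R < ‖intVec d l‖ →
        Disjoint (ball (gradMu d α (kAlpha d α k)) r) (ball (gradMu d α (kAlpha d α l)) r) :=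
  gradMu_kAlpha_balls_disjoint_general d α hα hα1
end
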